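/- arXiv:1602.04912 — 8 statements merged into one kernel-verified Lean document; each statement's English description precedes it below -/
import Mathlib

section
/- Let S be a symmetric matrix in R^{S×S} and ε > 0, and define the block matrix M = [[ (ε/(1+ε))S + I , -(ε/(2(1+ε)))(S + I) ], [ I , 0 ]] ∈ R^{2S×2S}. Then λ is an eigenvalue of M if and only if there exists an eigenvalue λ_S of S such that -2(1+ε)λ² + 2(1+ε+ελ_S)λ - ε(1+λ_S) = 0. Equivalently, the eigenvalues of M come in pairs λ± = (1+ε+ελ_S ± sqrt(1+ε²(λ_S²−1)))/(2(1+ε)) over eigenvalues λ_S of S. -/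
/-!
Swapping the two block rows of `M - λ` puts the identity block in the corner, and the Schur
complement gives `det (M - λ) = ± det (λ A + B - λ² I)` for `M = [[A, B], [I, 0]]`. For the
ADMM blocks this quadratic pencil is affine in `S`, namely `c S + d I`, and diagonalising `S`
orthogonally shows `det (c S + d I) = ∏ (c μ + d)` over the eigenvalues `μ` of `S`. Finally
`2 (1 + ε) (c μ + d)` is the quadratic of the statement.
-/

open Matrix

namespace Matrix

variable {n : Type*} [Fintype n] [DecidableEq n]

theorem det_fromBlocks_one₂₁ {R : Type*} [CommRing R] (A B D : Matrix n n R) :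
    (fromBlocks A B 1 D).det = Equiv.Perm.sign (Equiv.sumComm n n) * (B - A * D).det := by
  have h := det_permute (Equiv.sumComm n n) (fromBlocks A B 1 D)
  simp only [Equiv.sumComm_apply, fromBlocks_submatrix_sum_swap_left, submatrix_id_id,
    det_fromBlocks_one₁₁] at h
  rw [h, ← mul_assoc, ← Int.cast_mul, ← Units.val_mul, Int.units_mul_self, Units.val_one,
    Int.cast_one, one_mul]

section Field

variable {K : Type*} [Field K]

theorem mem_spectrum_iff_det_sub_smul_one_eq_zero (A : Matrix n n K) (x : K) :
    x ∈ spectrum K A ↔ (A - x • (1 : Matrix n n K)).det = 0 := by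
  rw [spectrum.mem_iff, Algebra.algebraMap_eq_smul_one, ← IsUnit.neg_iff, neg_sub,
    isUnit_iff_isUnit_det, isUnit_iff_ne_zero, not_not]

theorem mem_spectrum_fromBlocks_one_zero_iff (A B : Matrix n n K) (x : K) :
    x ∈ spectrum K (fromBlocks A B (1 : Matrix n n K) 0) ↔
      (x • A + B - x ^ 2 • (1 : Matrix n n K)).det = 0 := by
  have hsub : fromBlocks A B 1 0 - x • (1 : Matrix (n ⊕ n) (n ⊕ n) K)
      = fromBlocks (A - x • 1) B 1 (-(x • 1)) := by
    rw [← fromBlocks_one, fromBlocks_smul, sub_eq_add_neg, fromBlocks_neg, fromBlocks_add]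
    simp [sub_eq_add_neg]
  have hschur : B - (A - x • 1) * -(x • 1) = x • A + B - x ^ 2 • (1 : Matrix n n K) := by
    simp only [mul_neg, Matrix.mul_smul, Matrix.mul_one]
    module
  rw [mem_spectrum_iff_det_sub_smul_one_eq_zero, hsub, det_fromBlocks_one₂₁, hschur]
  exact ((Units.isUnit _).map (Int.castRingHom K)).mul_right_eq_zero

theorem spectrum_map_algebraMap {L : Type*} [Field L] [Algebra K L] (A : Matrix n n K) :
    spectrum K (A.map (algebraMap K L)) = spectrum K A := by
  ext x
  rw [← spectrum.algebraMap_mem_iff L, mem_spectrum_iff_isRoot_charpoly,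
    mem_spectrum_iff_isRoot_charpoly, charpoly_map,
    Polynomial.isRoot_map_iff (algebraMap K L).injective]

end Field

namespace IsHermitian

variable {𝕜 : Type*} [RCLike 𝕜] {A : Matrix n n 𝕜}

theorem det_smul_add_smul_one (hA : A.IsHermitian) (c d : 𝕜) :
    (c • A + d • (1 : Matrix n n 𝕜)).det = ∏ i, (c * hA.eigenvalues i + d) := by
  set φ := Unitary.conjStarAlgAut 𝕜 _ hA.eigenvectorUnitary
  have h : c • A + d • (1 : Matrix n n 𝕜) = φ (diagonal fun i ↦ c * hA.eigenvalues i + d) := by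
    conv_lhs => rw [hA.spectral_theorem]
    rw [← map_one φ, ← map_smul, ← map_smul, ← map_add]
    congr 1
    ext i j
    rcases eq_or_ne i j with rfl | hij
    · simp
    · simp [hij]
  rw [h, Unitary.conjStarAlgAut_apply, det_mul_comm, ← mul_assoc, Unitary.coe_star_mul_self,
    one_mul, det_diagonal]

theorem det_smul_add_smul_one_eq_zero_iff (hA : A.IsHermitian) (c d : 𝕜) :
    (c • A + d • (1 : Matrix n n 𝕜)).det = 0 ↔ ∃ x ∈ spectrum ℝ A, c * x + d = 0 := by
  rw [hA.det_smul_add_smul_one, Finset.prod_eq_zero_iff, hA.spectrum_real_eq_range_eigenvalues]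
  simp

end IsHermitian

end Matrix

/-- eigenvalues of the ADMM block matrix `M` are characterized by the
quadratic equation `-2(1+ε)λ² + 2(1+ε+ελ_S)λ - ε(1+λ_S) = 0` over eigenvalues `λ_S` of `S`. -/
theorem spectrum_admm_block_matrix (s : ℕ) (S : Matrix (Fin s) (Fin s) ℝ)
    (hS : S.IsSymm) (ε : ℝ) (hε : 0 < ε)
    (M : Matrix (Fin s ⊕ Fin s) (Fin s ⊕ Fin s) ℝ)
    (hM : M = Matrix.fromBlocks
      ((ε / (1 + ε)) • S + 1) (-(ε / (2 * (1 + ε))) • (S + 1)) 1 0)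
    (lam : ℂ) :
    lam ∈ spectrum ℂ (M.map (Complex.ofReal ·)) ↔
      ∃ lamS : ℝ, lamS ∈ spectrum ℝ S ∧
        -2 * (1 + (ε : ℂ)) * lam ^ 2 + 2 * (1 + ε + ε * lamS) * lam - ε * (1 + lamS) = 0 := by
  set Sc : Matrix (Fin s) (Fin s) ℂ := S.map (algebraMap ℝ ℂ)
  set a : ℂ := ε / (1 + ε)
  set b : ℂ := ε / (2 * (1 + ε))
  have hSc : Sc.IsHermitian := (isHermitian_iff_isSymm.mpr hS).map _ fun _ ↦ by simp
  have hMc : M.map (Complex.ofReal ·) = fromBlocks (a • Sc + 1) (-b • (Sc + 1)) 1 0 := by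
    subst hM
    rw [fromBlocks_map]
    congr 1 <;> ext i j <;> by_cases h : i = j <;> simp [Sc, a, b, one_apply, h, mul_add]
  have hpencil : lam • (a • Sc + 1) + -b • (Sc + 1) - lam ^ 2 • 1
      = (lam * a - b) • Sc + (lam - b - lam ^ 2) • (1 : Matrix (Fin s) (Fin s) ℂ) := by
    module
  have h1ε : (1 + ε : ℂ) ≠ 0 := by exact_mod_cast (by positivity : (1 + ε : ℝ) ≠ 0)
  rw [hMc, mem_spectrum_fromBlocks_one_zero_iff, hpencil, hSc.det_smul_add_smul_one_eq_zero_iff,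
    spectrum_map_algebraMap]
  refine exists_congr fun x ↦ and_congr_right fun _ ↦ ?_
  rw [← mul_eq_zero_iff_left (mul_ne_zero two_ne_zero h1ε), RCLike.ofReal_eq_complex_ofReal]
  exact Eq.congr_left (by simp only [a, b]; field_simp; ring)
end

section
/- For a symmetric matrix S and ε > 0, det(M − λI) = ((−1)^S/(2(1+ε))^S) · det( ε(2λ−1)S + (2λ(1+ε)(1−λ) − ε)I ), where M = [[ (ε/(1+ε))S + I , -(ε/(2(1+ε)))(S + I) ], [ I , 0 ]]. -/
open Matrix

/-- The case `C = 1` of Silvester's formula `det [[A, B], [C, D]] = det (A * D - B * C)` for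
commuting `C` and `D`. -/
theorem Matrix.det_fromBlocks_one₂₁_s1 {m R : Type*} [Fintype m] [DecidableEq m] [CommRing R]
    (A B D : Matrix m m R) : (fromBlocks A B 1 D).det = (A * D - B).det := by
  -- The unipotent column operation `[[1, 1 - D], [0, 1]]` turns the lower right block into `1`.
  have hcol : fromBlocks A B 1 D * fromBlocks 1 (1 - D) 0 1 =
      fromBlocks A (A * (1 - D) + B) 1 1 := by
    simp [fromBlocks_multiply]
  have hunipotent : (fromBlocks (1 : Matrix m m R) (1 - D) 0 1).det = 1 := by
    rw [det_fromBlocks_zero₂₁, det_one, mul_one]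
  calc (fromBlocks A B 1 D).det
      = (fromBlocks A (A * (1 - D) + B) 1 1).det := by rw [← hcol, det_mul, hunipotent, mul_one]
    _ = (A * D - B).det := by rw [det_fromBlocks_one₂₂]; congr 1; noncomm_ring

theorem det_admm_block_matrix_general (s : ℕ) (S : Matrix (Fin s) (Fin s) ℝ)
    (ε : ℝ) (hε : 0 < ε)
    (M : Matrix (Fin s ⊕ Fin s) (Fin s ⊕ Fin s) ℝ)
    (hM : M = Matrix.fromBlocks
      ((ε / (1 + ε)) • S + 1) (-(ε / (2 * (1 + ε))) • (S + 1)) 1 0)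
    (lam : ℝ) :
    (M - lam • 1).det =
      ((-1) ^ s / (2 * (1 + ε)) ^ s) *
        ((ε * (2 * lam - 1)) • S
          + (2 * lam * (1 + ε) * (1 - lam) - ε) • (1 : Matrix (Fin s) (Fin s) ℝ)).det := by
  have hε₁ : 1 + ε ≠ 0 := by positivity
  have hblocks : M - lam • 1 = fromBlocks ((ε / (1 + ε)) • S + 1 - lam • 1)
      (-(ε / (2 * (1 + ε))) • (S + 1)) 1 (-lam • 1) := by
    rw [hM, ← fromBlocks_one, fromBlocks_smul, sub_eq_add_neg, fromBlocks_neg, fromBlocks_add]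
    simp [sub_eq_add_neg]
  have hschur : ((ε / (1 + ε)) • S + 1 - lam • 1) * (-lam • 1) - -(ε / (2 * (1 + ε))) • (S + 1) =
      (-1 / (2 * (1 + ε))) • ((ε * (2 * lam - 1)) • S
        + (2 * lam * (1 + ε) * (1 - lam) - ε) • (1 : Matrix (Fin s) (Fin s) ℝ)) := by
    simp only [Matrix.mul_smul, Matrix.mul_one, sub_smul]
    match_scalars <;> field_simp <;> ring
  rw [hblocks, det_fromBlocks_one₂₁_s1, hschur, det_smul, Fintype.card_fin, div_pow]

/-- the characteristic determinant identity for the ADMM block matrix. -/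
theorem det_admm_block_matrix (s : ℕ) (S : Matrix (Fin s) (Fin s) ℝ)
    (hS : S.IsSymm) (ε : ℝ) (hε : 0 < ε)
    (M : Matrix (Fin s ⊕ Fin s) (Fin s ⊕ Fin s) ℝ)
    (hM : M = Matrix.fromBlocks
      ((ε / (1 + ε)) • S + 1) (-(ε / (2 * (1 + ε))) • (S + 1)) 1 0)
    (lam : ℝ) :
    (M - lam • 1).det =
      ((-1) ^ s / (2 * (1 + ε)) ^ s) *
        ((ε * (2 * lam - 1)) • S
          + (2 * lam * (1 + ε) * (1 - lam) - ε) • (1 : Matrix (Fin s) (Fin s) ℝ)).det :=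
  det_admm_block_matrix_general s S ε hε M hM lam
end

section
/- Let λ_S ∈ [0,1) and ε > 0 with 1 + ε²(λ_S² − 1) < 0 (complex roots). Define the common modulus |λ±(λ_S,ε)| = sqrt((1+ε+ελ_S)² − 1 − ε²(λ_S²−1)) / (2(1+ε)). Then |λ±(λ_S,ε)| > ε/(1+ε) if and only if ε < (1+λ_S)/(1−λ_S), with equality iff ε = (1+λ_S)/(1−λ_S). -/
/-!
The radicand factors as `2ε(1+λ_S)(1+ε)`, so the squared modulus is `ε(1+λ_S)/(2(1+ε))`, and
`ε(1+λ_S)/(2(1+ε)) - (ε/(1+ε))² = ε(1-λ_S)/(2(1+ε)²) · ((1+λ_S)/(1-λ_S) - ε)`.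
The prefactor is positive, so both nonnegative quantities compare as `ε` and `(1+λ_S)/(1-λ_S)` do.
-/

lemma lt_iff_and_eq_iff_of_sq_sub_sq_eq {m r k A x : ℝ} (hm : 0 ≤ m) (hr : 0 ≤ r) (hk : 0 < k)
    (h : m ^ 2 - r ^ 2 = k * (A - x)) : (r < m ↔ x < A) ∧ (m = r ↔ x = A) := by
  constructor
  · rw [← pow_lt_pow_iff_left₀ hr hm two_ne_zero, ← sub_pos, h, mul_pos_iff_of_pos_left hk,
      sub_pos]
  · rw [← sq_eq_sq₀ hm hr, ← sub_eq_zero, h, mul_eq_zero, or_iff_right hk.ne', sub_eq_zero,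
      eq_comm]

lemma sq_sqrt_radicand_div {l ε : ℝ} (hl : -1 ≤ l) (hε : 0 ≤ ε) :
    (Real.sqrt ((1 + ε + ε * l) ^ 2 - 1 - ε ^ 2 * (l ^ 2 - 1)) / (2 * (1 + ε))) ^ 2 =
      ε * (1 + l) / (2 * (1 + ε)) := by
  have hradicand : (1 + ε + ε * l) ^ 2 - 1 - ε ^ 2 * (l ^ 2 - 1) = 2 * ε * (1 + l) * (1 + ε) := by
    ring
  have hnonneg : 0 ≤ 2 * ε * (1 + l) * (1 + ε) := by
    have : 0 ≤ 1 + l := by linarith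
    positivity
  rw [div_pow, hradicand, Real.sq_sqrt hnonneg]
  field_simp

lemma modulus_sq_sub_ratio_sq {l ε : ℝ} (hl : l ≠ 1) (hε : 1 + ε ≠ 0) :
    ε * (1 + l) / (2 * (1 + ε)) - (ε / (1 + ε)) ^ 2 =
      ε * (1 - l) / (2 * (1 + ε) ^ 2) * ((1 + l) / (1 - l) - ε) := by
  have : 1 - l ≠ 0 := sub_ne_zero.mpr hl.symm
  field_simp
  ring

theorem modulus_vs_eps_ratio_general (lamS ε : ℝ) (hlam : lamS ∈ Set.Ico (0 : ℝ) 1) (hε : 0 < ε) :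
    (ε / (1 + ε) <
        Real.sqrt ((1 + ε + ε * lamS) ^ 2 - 1 - ε ^ 2 * (lamS ^ 2 - 1)) / (2 * (1 + ε)) ↔
      ε < (1 + lamS) / (1 - lamS)) ∧
    (Real.sqrt ((1 + ε + ε * lamS) ^ 2 - 1 - ε ^ 2 * (lamS ^ 2 - 1)) / (2 * (1 + ε)) =
        ε / (1 + ε) ↔
      ε = (1 + lamS) / (1 - lamS)) := by
  obtain ⟨hl0, hl1⟩ := hlam
  have h1ε : 0 < 1 + ε := by linarith
  have h1l : 0 < 1 - lamS := by linarith
  apply lt_iff_and_eq_iff_of_sq_sub_sq_eq (by positivity) (by positivity)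
    (k := ε * (1 - lamS) / (2 * (1 + ε) ^ 2)) (by positivity)
  rw [sq_sqrt_radicand_div (by linarith) hε.le]
  exact modulus_sq_sub_ratio_sq hl1.ne h1ε.ne'

/-- in the complex-root regime, the common modulus compares to `ε/(1+ε)`
exactly according to the position of `ε` relative to `(1+λ_S)/(1-λ_S)`. -/
theorem modulus_vs_eps_ratio (lamS ε : ℝ) (hlam : lamS ∈ Set.Ico (0 : ℝ) 1) (hε : 0 < ε)
    (hdisc : 1 + ε ^ 2 * (lamS ^ 2 - 1) < 0) :
    (ε / (1 + ε) <
        Real.sqrt ((1 + ε + ε * lamS) ^ 2 - 1 - ε ^ 2 * (lamS ^ 2 - 1)) / (2 * (1 + ε)) ↔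
      ε < (1 + lamS) / (1 - lamS)) ∧
    (Real.sqrt ((1 + ε + ε * lamS) ^ 2 - 1 - ε ^ 2 * (lamS ^ 2 - 1)) / (2 * (1 + ε)) =
        ε / (1 + ε) ↔
      ε = (1 + lamS) / (1 - lamS)) :=
  modulus_vs_eps_ratio_general lamS ε hlam hε
end

section
/- Fix λ_S ∈ [0,1). The function ε ↦ λ+(λ_S, ε) = (1+ε+ελ_S + sqrt(1+ε²(λ_S²−1)))/(2(1+ε)), defined for ε > 0 with 1+ε²(λ_S²−1) ≥ 0, is strictly decreasing in ε. -/
/-!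
Writing `a = √D(ε₁)`, `b = √D(ε₂)` with `D(ε) = 1 - ε²(1 - λ²)`, the claim
`λ₊(ε₂) < λ₊(ε₁)` clears to `λ(ε₂ - ε₁) < a(1 + ε₂) - b(1 + ε₁)`. Multiplying by `a + b` and using
`a² - b² = (1 - λ²)(ε₂² - ε₁²)`, this becomes `(λ - a)(a + b) < (1 + ε₁)(ε₁ + ε₂)(1 - λ²)`, which is
trivial when `λ < a`, and otherwise follows from `(λ - a)(a + b) ≤ λ² - a² = (1 - λ²)(ε₁² - 1)`.
-/

noncomputable def lamPlus (l ε : ℝ) : ℝ :=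
  (1 + ε + ε * l + √(1 + ε ^ 2 * (l ^ 2 - 1))) / (2 * (1 + ε))

section

variable {l a b e₁ e₂ : ℝ}

lemma sub_mul_add_lt_of_sq_eq (hl : l ^ 2 < 1) (he₁ : 0 < e₁) (he₂ : 0 < e₂) (hb : 0 ≤ b)
    (hba : b < a) (ha₂ : a ^ 2 = 1 + e₁ ^ 2 * (l ^ 2 - 1)) :
    (l - a) * (a + b) < (1 + e₁) * (e₁ + e₂) * (1 - l ^ 2) := by
  have hk : 0 < 1 - l ^ 2 := sub_pos.2 hl
  rcases le_or_gt a l with hal | hla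
  · calc (l - a) * (a + b) ≤ (l - a) * (l + a) := by gcongr
      _ = (e₁ ^ 2 - 1) * (1 - l ^ 2) := by linear_combination -ha₂
      _ < (1 + e₁) * (e₁ + e₂) * (1 - l ^ 2) := by gcongr; nlinarith
  · calc (l - a) * (a + b) ≤ 0 := mul_nonpos_of_nonpos_of_nonneg (by linarith) (by linarith)
      _ < (1 + e₁) * (e₁ + e₂) * (1 - l ^ 2) := by positivity

lemma mul_sub_lt_of_sq_eq (hl : l ^ 2 < 1) (he₁ : 0 < e₁) (he : e₁ < e₂) (hb : 0 ≤ b)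
    (hba : b < a) (ha₂ : a ^ 2 = 1 + e₁ ^ 2 * (l ^ 2 - 1))
    (hb₂ : b ^ 2 = 1 + e₂ ^ 2 * (l ^ 2 - 1)) :
    l * (e₂ - e₁) < a * (1 + e₂) - b * (1 + e₁) := by
  have hmain := sub_mul_add_lt_of_sq_eq hl he₁ (he₁.trans he) hb hba ha₂
  have hprod : 0 < (a * (1 + e₂) - b * (1 + e₁) - l * (e₂ - e₁)) * (a + b) := by
    have hid : (a * (1 + e₂) - b * (1 + e₁) - l * (e₂ - e₁)) * (a + b) =
        (e₂ - e₁) * ((1 + e₁) * (e₁ + e₂) * (1 - l ^ 2) - (l - a) * (a + b)) := by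
      linear_combination (1 + e₁) * (ha₂ - hb₂)
    rw [hid]
    exact mul_pos (sub_pos.2 he) (sub_pos.2 hmain)
  linarith [pos_of_mul_pos_left hprod (by linarith)]

end

lemma lamPlus_strictAntiOn {l : ℝ} (hl : l ^ 2 < 1) :
    StrictAntiOn (lamPlus l) {ε | 0 < ε ∧ 0 ≤ 1 + ε ^ 2 * (l ^ 2 - 1)} := by
  rintro e₁ ⟨he₁, hd₁⟩ e₂ ⟨he₂, hd₂⟩ he
  have hba : √(1 + e₂ ^ 2 * (l ^ 2 - 1)) < √(1 + e₁ ^ 2 * (l ^ 2 - 1)) :=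
    Real.sqrt_lt_sqrt hd₂ (by
      nlinarith [mul_pos (mul_pos (sub_pos.2 he) (add_pos he₁ he₂)) (sub_pos.2 hl)])
  have key := mul_sub_lt_of_sq_eq hl he₁ he (Real.sqrt_nonneg _) hba
    (Real.sq_sqrt hd₁) (Real.sq_sqrt hd₂)
  rw [lamPlus, lamPlus, div_lt_div_iff₀ (by linarith) (by linarith)]
  linarith

/-- for fixed `λ_S ∈ [0,1)`, `ε ↦ λ₊(λ_S, ε)` is strictly decreasing on the
set of positive `ε` with nonnegative discriminant. -/
theorem lamPlus_strictAnti_in_eps (lamS : ℝ) (hlam : lamS ∈ Set.Ico (0 : ℝ) 1) :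
    ∀ ε₁ > (0 : ℝ), ∀ ε₂ > (0 : ℝ),
      0 ≤ 1 + ε₁ ^ 2 * (lamS ^ 2 - 1) → 0 ≤ 1 + ε₂ ^ 2 * (lamS ^ 2 - 1) → ε₁ < ε₂ →
      (1 + ε₂ + ε₂ * lamS + Real.sqrt (1 + ε₂ ^ 2 * (lamS ^ 2 - 1))) / (2 * (1 + ε₂)) <
        (1 + ε₁ + ε₁ * lamS + Real.sqrt (1 + ε₁ ^ 2 * (lamS ^ 2 - 1))) / (2 * (1 + ε₁)) := by
  intro ε₁ hε₁ ε₂ hε₂ hd₁ hd₂ hε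
  have hl : lamS ^ 2 < 1 := by nlinarith [hlam.1, hlam.2]
  exact lamPlus_strictAntiOn hl ⟨hε₁, hd₁⟩ ⟨hε₂, hd₂⟩ hε
end

section
/- Fix λ_S ∈ [0,1) and let ε* = 1/sqrt(1 − λ_S²). Define ρ(ε, λ_S) piecewise: ρ = λ+(λ_S,ε) = (1+ε+ελ_S + sqrt(1+ε²(λ_S²−1)))/(2(1+ε)) when the discriminant is nonnegative, ρ = sqrt((1+ε+ελ_S)² − 1 − ε²(λ_S²−1))/(2(1+ε)) when the discriminant is negative and ε ≤ (1+λ_S)/(1−λ_S), and ρ = ε/(1+ε) when ε > (1+λ_S)/(1−λ_S). Then ρ(·, λ_S) attains its global minimum over ε > 0 at ε = ε*, with minimum value ρ* = (λ_S + 1 + sqrt(1−λ_S²)) / (2(1 + sqrt(1−λ_S²))). -/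
/-!
Write `s = √(1 - λ_S²)`, so that `ε* = 1/s` is where the discriminant vanishes and
`(λ_S + 1 + s)² = 2(1 + λ_S)(1 + s)`. In the real-root regime `ε s ≤ 1`, cross-multiplying
reduces `ρ* ≤ λ₊` to `λ_S (1 - ε s) ≤ (1 + s) √(1 - (ε s)²)`, which holds because
`1 - t ≤ √(1 - t²)` on `[0, 1]`. In the complex regime `ρ² = (1 + λ_S)/(2(1 + 1/ε))` while
`ρ*² = (1 + λ_S)/(2(1 + s))`, and `1/ε ≤ s`. In the last regime
`ρ = ε/(1 + ε) > (1 + λ_S)/2 ≥ ρ*`.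
-/

namespace Slem

variable {l s ε : ℝ}

lemma one_sub_le_sqrt_one_sub_sq {t : ℝ} (h0 : 0 ≤ t) (h1 : t ≤ 1) : 1 - t ≤ √(1 - t ^ 2) :=
  Real.le_sqrt_of_sq_le (by nlinarith)

lemma add_one_add_sq_eq (hs2 : s ^ 2 = 1 - l ^ 2) : (l + 1 + s) ^ 2 = 2 * (1 + l) * (1 + s) := by
  linear_combination hs2

lemma disc_inv_eq_zero (hs : s ≠ 0) (hs2 : s ^ 2 = 1 - l ^ 2) :
    1 + (1 / s) ^ 2 * (l ^ 2 - 1) = 0 := by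
  field_simp
  linarith

lemma realRoot_inv (hs : 0 < s) (hs2 : s ^ 2 = 1 - l ^ 2) :
    (1 + 1 / s + 1 / s * l + √(1 + (1 / s) ^ 2 * (l ^ 2 - 1))) / (2 * (1 + 1 / s)) =
      (l + 1 + s) / (2 * (1 + s)) := by
  rw [disc_inv_eq_zero hs.ne' hs2, Real.sqrt_zero]
  field_simp
  ring

lemma le_realRoot (hs : 0 ≤ s) (hs2 : s ^ 2 = 1 - l ^ 2) (hε : 0 < ε)
    (hdisc : 0 ≤ 1 + ε ^ 2 * (l ^ 2 - 1)) :
    (l + 1 + s) / (2 * (1 + s)) ≤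
      (1 + ε + ε * l + √(1 + ε ^ 2 * (l ^ 2 - 1))) / (2 * (1 + ε)) := by
  have hεs0 : 0 ≤ ε * s := by positivity
  have hεs1 : ε * s ≤ 1 := by nlinarith
  have hl1 : l ≤ 1 := by nlinarith
  have hroot : 1 + ε ^ 2 * (l ^ 2 - 1) = 1 - (ε * s) ^ 2 := by linear_combination ε ^ 2 * hs2
  rw [hroot]
  set a := √(1 - (ε * s) ^ 2)
  have key : l * (1 - ε * s) ≤ (1 + s) * a :=
    calc l * (1 - ε * s) ≤ 1 * (1 - ε * s) := by gcongr
      _ ≤ 1 * a := by gcongr; exact one_sub_le_sqrt_one_sub_sq hεs0 hεs1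
      _ ≤ (1 + s) * a := by gcongr; linarith
  rw [div_le_div_iff₀ (by positivity) (by positivity)]
  linear_combination 2 * key

lemma le_complexModulus (hs : 0 ≤ s) (hs2 : s ^ 2 = 1 - l ^ 2) (hε : 0 < ε)
    (hdisc : 1 + ε ^ 2 * (l ^ 2 - 1) < 0) :
    (l + 1 + s) / (2 * (1 + s)) ≤
      √((1 + ε + ε * l) ^ 2 - 1 - ε ^ 2 * (l ^ 2 - 1)) / (2 * (1 + ε)) := by
  have hεs2 : 1 < (ε * s) ^ 2 := by linear_combination hdisc - ε ^ 2 * hs2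
  have hεs : 1 ≤ ε * s := by nlinarith [mul_nonneg hε.le hs]
  have hl : 0 ≤ 1 + l := by nlinarith
  have hlhs : 0 ≤ l + 1 + s := by linarith
  rw [le_div_iff₀ (by positivity), Real.le_sqrt (by positivity) (by nlinarith)]
  have hsq : ((l + 1 + s) / (2 * (1 + s)) * (2 * (1 + ε))) ^ 2 =
      2 * (1 + l) * (1 + ε) ^ 2 / (1 + s) := by
    rw [div_mul_eq_mul_div, div_pow, mul_pow, add_one_add_sq_eq hs2]
    field_simp
  rw [hsq, div_le_iff₀ (by positivity)]
  linear_combination 2 * mul_le_mul_of_nonneg_left hεs (by positivity : 0 ≤ (1 + l) * (1 + ε))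

lemma le_overdamped (hl0 : 0 ≤ l) (hl1 : l < 1) (hs : 0 ≤ s) (hε : (1 + l) / (1 - l) < ε) :
    (l + 1 + s) / (2 * (1 + s)) ≤ ε / (1 + ε) := by
  have hε' : 1 + l < ε * (1 - l) := by rwa [div_lt_iff₀ (by linarith)] at hε
  have hε0 : 0 < ε := by nlinarith
  calc (l + 1 + s) / (2 * (1 + s)) ≤ (1 + l) / 2 := by
        rw [div_le_div_iff₀ (by positivity) (by positivity)]
        nlinarith [mul_nonneg hl0 hs]
    _ ≤ ε / (1 + ε) := by
        rw [div_le_div_iff₀ (by positivity) (by positivity)]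
        nlinarith

end Slem

/-- the piecewise SLEM `ρ(·, λ_S)` attains its global minimum over `ε > 0`
at `ε* = 1/√(1-λ_S²)`, with minimum value `(λ_S + 1 + √(1-λ_S²)) / (2(1 + √(1-λ_S²)))`. -/
theorem slem_global_min (lamS : ℝ) (hlam : lamS ∈ Set.Ico (0 : ℝ) 1)
    (ρ : ℝ → ℝ)
    (hρ : ∀ ε : ℝ, ρ ε =
      if 0 ≤ 1 + ε ^ 2 * (lamS ^ 2 - 1) then
        (1 + ε + ε * lamS + Real.sqrt (1 + ε ^ 2 * (lamS ^ 2 - 1))) / (2 * (1 + ε))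
      else if ε ≤ (1 + lamS) / (1 - lamS) then
        Real.sqrt ((1 + ε + ε * lamS) ^ 2 - 1 - ε ^ 2 * (lamS ^ 2 - 1)) / (2 * (1 + ε))
      else ε / (1 + ε)) :
    (∀ ε > (0 : ℝ), ρ (1 / Real.sqrt (1 - lamS ^ 2)) ≤ ρ ε) ∧
      ρ (1 / Real.sqrt (1 - lamS ^ 2)) =
        (lamS + 1 + Real.sqrt (1 - lamS ^ 2)) / (2 * (1 + Real.sqrt (1 - lamS ^ 2))) := by
  obtain ⟨hl0, hl1⟩ := hlam
  have hq : 0 < 1 - lamS ^ 2 := by nlinarith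
  set s := √(1 - lamS ^ 2)
  have hs : 0 < s := Real.sqrt_pos.2 hq
  have hs2 : s ^ 2 = 1 - lamS ^ 2 := Real.sq_sqrt hq.le
  have hmin : ρ (1 / s) = (lamS + 1 + s) / (2 * (1 + s)) := by
    rw [hρ, if_pos (Slem.disc_inv_eq_zero hs.ne' hs2).ge, Slem.realRoot_inv hs hs2]
  refine ⟨fun ε hε => ?_, hmin⟩
  rw [hmin, hρ ε]
  split_ifs with hdisc hover
  · exact Slem.le_realRoot hs.le hs2 hε hdisc
  · exact Slem.le_complexModulus hs.le hs2 hε (not_le.1 hdisc)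
  · exact Slem.le_overdamped hl0 hl1 hs.le (not_le.1 hover)
end

section
/- The function ρ*(λ) = (λ + 1 + sqrt(1−λ²)) / (2(1 + sqrt(1−λ²))) for λ ∈ [0,1), extended by ρ*(λ) = 1/2 for λ ∈ [−1,0), is continuous and monotone increasing on [−1,1), satisfies ρ*(0) = 1/2, and ρ*(λ) → 1 as λ → 1⁻. -/
/-! Writing `(λ + 1 + s) / (2 (1 + s)) = 1/2 + λ / (2 (1 + s))` with `s = √(1 - λ²)` turns both
branches of `ρ*` into the single expression `1/2 + λ⁺ / (2 (1 + √(1 - λ²)))`, which is continuous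
on all of `ℝ`. For `0 ≤ λ` its numerator increases and its denominator decreases, so it is
monotone, and its value at `λ = 1` is `1`. -/

open Filter Topology

noncomputable def optSlem (lam : ℝ) : ℝ :=
  1 / 2 + max lam 0 / (2 * (1 + Real.sqrt (1 - lam ^ 2)))

lemma two_mul_one_add_sqrt_pos (x : ℝ) : 0 < 2 * (1 + Real.sqrt x) := by
  have := Real.sqrt_nonneg x
  positivity

lemma optSlem_eq_ite (lam : ℝ) :
    optSlem lam = if lam < 0 then 1 / 2
      else (lam + 1 + Real.sqrt (1 - lam ^ 2)) / (2 * (1 + Real.sqrt (1 - lam ^ 2))) := by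
  have hd := two_mul_one_add_sqrt_pos (1 - lam ^ 2)
  unfold optSlem
  split_ifs with h
  · simp [max_eq_right h.le]
  · rw [max_eq_left (not_lt.mp h)]
    field_simp
    ring

lemma continuous_optSlem : Continuous optSlem :=
  continuous_const.add <| (continuous_id.max continuous_const).div (by fun_prop)
    fun x => (two_mul_one_add_sqrt_pos _).ne'

lemma monotone_optSlem : Monotone optSlem := by
  intro a b hab
  unfold optSlem
  gcongr 1 / 2 + ?_
  rcases le_or_gt a 0 with ha | ha
  · rw [max_eq_right ha, zero_div]
    exact div_nonneg (le_max_right _ _) (two_mul_one_add_sqrt_pos _).le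
  · rw [max_eq_left ha.le, max_eq_left (ha.le.trans hab)]
    have hsqrt : Real.sqrt (1 - b ^ 2) ≤ Real.sqrt (1 - a ^ 2) :=
      Real.sqrt_le_sqrt (by nlinarith)
    exact div_le_div₀ (ha.le.trans hab) hab (two_mul_one_add_sqrt_pos _) (by linarith)

lemma optSlem_zero : optSlem 0 = 1 / 2 := by
  simp [optSlem]

lemma optSlem_one : optSlem 1 = 1 := by
  norm_num [optSlem]

/-- the optimal SLEM `ρ*`, extended by `1/2` on `[-1,0)`, is continuous and
monotone increasing on `[-1,1)`, equals `1/2` at `0`, and tends to `1` as `λ → 1⁻`. -/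
theorem rhoStar_props (ρStar : ℝ → ℝ)
    (hρ : ∀ lam : ℝ, ρStar lam =
      if lam < 0 then 1 / 2
      else (lam + 1 + Real.sqrt (1 - lam ^ 2)) / (2 * (1 + Real.sqrt (1 - lam ^ 2)))) :
    ContinuousOn ρStar (Set.Ico (-1 : ℝ) 1) ∧
    MonotoneOn ρStar (Set.Ico (-1 : ℝ) 1) ∧
    ρStar 0 = 1 / 2 ∧
    Tendsto ρStar (𝓝[<] (1 : ℝ)) (𝓝 1) := by
  obtain rfl : ρStar = optSlem := funext fun lam => (hρ lam).trans (optSlem_eq_ite lam).symm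
  refine ⟨continuous_optSlem.continuousOn, monotone_optSlem.monotoneOn _, optSlem_zero, ?_⟩
  have h := continuous_optSlem.tendsto 1
  rw [optSlem_one] at h
  exact h.mono_left nhdsWithin_le_nhds
end

section
/- For λ ∈ [0,1), define ρ*(λ) = (λ + 1 + sqrt(1−λ²)) / (2(1 + sqrt(1−λ²))). Then ρ* is a convex function of λ on [0,1). -/
open Real Set

/- With `s = √(1 - λ²)`, the derivative of `ρ*` on `(-1, 1)` is `1 / (2 s (1 + s))`. On `[0, 1)`
the quantity `s` decreases in `λ`, so this derivative increases and `ρ*` is convex there. -/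

noncomputable def rhoStar (x : ℝ) : ℝ :=
  (x + 1 + √(1 - x ^ 2)) / (2 * (1 + √(1 - x ^ 2)))

noncomputable def rhoStarDeriv (x : ℝ) : ℝ :=
  1 / (2 * √(1 - x ^ 2) * (1 + √(1 - x ^ 2)))

theorem continuous_rhoStar : Continuous rhoStar :=
  Continuous.div (by fun_prop) (by fun_prop) fun x => by positivity

theorem hasDerivAt_rhoStar {x : ℝ} (hx : x ^ 2 < 1) : HasDerivAt rhoStar (rhoStarDeriv x) x := by
  have hu : 0 < 1 - x ^ 2 := by linarith
  set s := √(1 - x ^ 2) with hs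
  have hs_pos : 0 < s := sqrt_pos.mpr hu
  have hs_sq : s ^ 2 = 1 - x ^ 2 := sq_sqrt hu.le
  have hsqrt : HasDerivAt (fun t => √(1 - t ^ 2)) (1 / (2 * s) * -(2 * x)) x :=
    (hasDerivAt_sqrt hu.ne').comp x (by simpa using (hasDerivAt_pow 2 x).const_sub 1)
  have hnum := ((hasDerivAt_id x).add_const 1).add hsqrt
  have hden := (hsqrt.const_add 1).const_mul 2
  refine (hnum.div hden (by positivity)).congr_deriv ?_
  simp only [rhoStarDeriv, Pi.add_apply, id, ← hs]
  rw [div_eq_div_iff (by positivity) (by positivity)]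
  field_simp
  nlinarith

theorem monotoneOn_rhoStarDeriv : MonotoneOn rhoStarDeriv (Ico 0 1) := by
  intro a ⟨ha₀, ha₁⟩ b ⟨hb₀, hb₁⟩ hab
  have hsb : 0 < √(1 - b ^ 2) := sqrt_pos.mpr (by nlinarith)
  have hs_anti : √(1 - b ^ 2) ≤ √(1 - a ^ 2) := sqrt_le_sqrt (by nlinarith)
  exact one_div_le_one_div_of_le (by positivity) (by nlinarith)

/-- the optimal SLEM `ρ*` is convex on `[0,1)`. -/
theorem rhoStar_convexOn :
    ConvexOn ℝ (Set.Ico (0 : ℝ) 1)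
      (fun lam : ℝ =>
        (lam + 1 + Real.sqrt (1 - lam ^ 2)) / (2 * (1 + Real.sqrt (1 - lam ^ 2)))) := by
  have hderiv : ∀ x ∈ interior (Ico (0 : ℝ) 1), HasDerivAt rhoStar (rhoStarDeriv x) x := by
    rw [interior_Ico]
    exact fun x ⟨h₀, h₁⟩ => hasDerivAt_rhoStar (by nlinarith)
  refine MonotoneOn.convexOn_of_deriv (convex_Ico 0 1) continuous_rhoStar.continuousOn
    (fun x hx => (hderiv x hx).differentiableAt.differentiableWithinAt) ?_
  refine (monotoneOn_rhoStarDeriv.mono interior_subset).congr fun x hx => ?_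
  exact (hderiv x hx).deriv.symm
end

section
/- Fix λ ∈ [0,1) and n a natural number. Define g_n(λ) = γ(λ)·(ρ*(λ))^n with γ(λ) = 2·sqrt(1−λ²)/(1+λ+sqrt(1−λ²)) and ρ*(λ) = (λ+1+sqrt(1−λ²))/(2(1+sqrt(1−λ²))). Then the derivative of g_n with respect to λ is positive if and only if n > (λ+1)/sqrt(1−λ²). Consequently, if n > 2/sqrt(1−λ̃²) + 1 for some λ̃ ∈ [0,1), then g_n is strictly increasing on [0, λ̃]. -/
/-!
Both factors have simple logarithmic derivatives: with `s = √(1 - λ²)` and `A = 1 + λ + s`,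
`γ'/γ = -(λ + 1)/(s² A)` and `ρ*'/ρ* = 1/(s A)`. Hence `g_n'/g_n = (n s - (λ + 1))/(s² A)`, and
since `g_n > 0` the sign of `g_n'` is that of `n s - (λ + 1)`. On `[0, λ̃]` we have
`(λ + 1)/s ≤ 2/√(1 - λ̃²)`, so the derivative is positive there.
-/

open Set

section LogDeriv

variable {𝕜 : Type*} [NontriviallyNormedField 𝕜] {f h : 𝕜 → 𝕜} {a b x : 𝕜}

theorem HasDerivAt.mul_of_logDeriv
    (hf : HasDerivAt f (f x * a) x) (hh : HasDerivAt h (h x * b) x) :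
    HasDerivAt (fun y => f y * h y) (f x * h x * (a + b)) x :=
  (hf.mul hh).congr_deriv (by ring)

theorem HasDerivAt.pow_of_logDeriv (hf : HasDerivAt f (f x * a) x) (n : ℕ) :
    HasDerivAt (fun y => f y ^ n) (f x ^ n * (n * a)) x := by
  refine (hf.pow n).congr_deriv ?_
  cases n with
  | zero => simp
  | succ m => push_cast; ring

end LogDeriv

noncomputable def gammaOpt (x : ℝ) : ℝ :=
  2 * √(1 - x ^ 2) / (1 + x + √(1 - x ^ 2))

noncomputable def rhoStarOpt (x : ℝ) : ℝ :=
  (x + 1 + √(1 - x ^ 2)) / (2 * (1 + √(1 - x ^ 2)))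

noncomputable def gn (n : ℕ) (x : ℝ) : ℝ :=
  gammaOpt x * rhoStarOpt x ^ n

section OpenInterval

variable {x : ℝ} (hx : x ∈ Ioo (-1 : ℝ) 1)
include hx

theorem one_sub_sq_pos : 0 < 1 - x ^ 2 := by
  nlinarith [hx.1, hx.2]

theorem sqrt_one_sub_sq_pos : 0 < √(1 - x ^ 2) :=
  Real.sqrt_pos.2 (one_sub_sq_pos hx)

theorem one_add_add_sqrt_pos : 0 < 1 + x + √(1 - x ^ 2) := by
  linarith [sqrt_one_sub_sq_pos hx, hx.1]

theorem gammaOpt_pos : 0 < gammaOpt x :=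
  div_pos (by linarith [sqrt_one_sub_sq_pos hx]) (one_add_add_sqrt_pos hx)

theorem rhoStarOpt_pos : 0 < rhoStarOpt x :=
  div_pos (by linarith [one_add_add_sqrt_pos hx]) (by linarith [sqrt_one_sub_sq_pos hx])

theorem gn_pos (n : ℕ) : 0 < gn n x :=
  mul_pos (gammaOpt_pos hx) (pow_pos (rhoStarOpt_pos hx) n)

theorem hasDerivAt_sqrt_one_sub_sq :
    HasDerivAt (fun y => √(1 - y ^ 2)) (-x / √(1 - x ^ 2)) x := by
  have hpoly : HasDerivAt (fun y : ℝ => 1 - y ^ 2) (-(2 * x)) x := by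
    simpa using (hasDerivAt_pow 2 x).const_sub 1
  refine ((Real.hasDerivAt_sqrt (one_sub_sq_pos hx).ne').comp x hpoly).congr_deriv ?_
  field_simp

theorem hasDerivAt_gammaOpt :
    HasDerivAt gammaOpt
      (gammaOpt x * (-(x + 1) / ((1 - x ^ 2) * (1 + x + √(1 - x ^ 2))))) x := by
  have hs := sqrt_one_sub_sq_pos hx
  have hA := one_add_add_sqrt_pos hx
  have hs2 : √(1 - x ^ 2) ^ 2 = 1 - x ^ 2 := Real.sq_sqrt (one_sub_sq_pos hx).le
  have hds := hasDerivAt_sqrt_one_sub_sq hx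
  refine ((hds.const_mul 2).div (((hasDerivAt_id x).const_add 1).add hds) hA.ne').congr_deriv ?_
  simp only [gammaOpt, Pi.add_apply, id]
  generalize √(1 - x ^ 2) = s at *
  rw [← hs2]
  field_simp
  linear_combination (-1) * hs2

theorem hasDerivAt_rhoStarOpt :
    HasDerivAt rhoStarOpt (rhoStarOpt x * (1 / (√(1 - x ^ 2) * (1 + x + √(1 - x ^ 2))))) x := by
  have hs := sqrt_one_sub_sq_pos hx
  have hA := one_add_add_sqrt_pos hx
  have hs2 : √(1 - x ^ 2) ^ 2 = 1 - x ^ 2 := Real.sq_sqrt (one_sub_sq_pos hx).le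
  have hds := hasDerivAt_sqrt_one_sub_sq hx
  refine ((((hasDerivAt_id x).add_const 1).add hds).div ((hds.const_add 1).const_mul 2)
    (by positivity)).congr_deriv ?_
  simp only [rhoStarOpt, Pi.add_apply, id]
  generalize √(1 - x ^ 2) = s at *
  field_simp
  linear_combination (1 + x + s) * hs2

theorem hasDerivAt_gn (n : ℕ) :
    HasDerivAt (gn n)
      (gn n x * ((n * √(1 - x ^ 2) - (x + 1)) / ((1 - x ^ 2) * (1 + x + √(1 - x ^ 2))))) x := by
  have hs := sqrt_one_sub_sq_pos hx
  have hA := one_add_add_sqrt_pos hx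
  have hs2 : √(1 - x ^ 2) ^ 2 = 1 - x ^ 2 := Real.sq_sqrt (one_sub_sq_pos hx).le
  refine ((hasDerivAt_gammaOpt hx).mul_of_logDeriv
    ((hasDerivAt_rhoStarOpt hx).pow_of_logDeriv n)).congr_deriv ?_
  unfold gn
  generalize gammaOpt x * rhoStarOpt x ^ n = c
  generalize √(1 - x ^ 2) = s at *
  rw [← hs2]
  field_simp
  ring

theorem deriv_gn_pos_iff (n : ℕ) :
    0 < deriv (gn n) x ↔ (x + 1) / √(1 - x ^ 2) < n := by
  have hC : 0 < (1 - x ^ 2) * (1 + x + √(1 - x ^ 2)) :=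
    mul_pos (one_sub_sq_pos hx) (one_add_add_sqrt_pos hx)
  rw [(hasDerivAt_gn hx n).deriv, mul_pos_iff_of_pos_left (gn_pos hx n),
    div_pos_iff_of_pos_right hC, sub_pos, div_lt_iff₀ (sqrt_one_sub_sq_pos hx)]

end OpenInterval

theorem add_one_div_sqrt_le_of_mem_Icc {x lamT : ℝ} (hT : lamT < 1) (hx : x ∈ Icc 0 lamT) :
    (x + 1) / √(1 - x ^ 2) ≤ 2 / √(1 - lamT ^ 2) := by
  have hsT : 0 < √(1 - lamT ^ 2) := sqrt_one_sub_sq_pos ⟨by linarith [hx.1, hx.2], hT⟩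
  have hle : √(1 - lamT ^ 2) ≤ √(1 - x ^ 2) :=
    Real.sqrt_le_sqrt (by nlinarith [hx.1, hx.2])
  exact div_le_div₀ zero_le_two (by linarith [hx.2]) hsT hle

theorem strictMonoOn_gn {n : ℕ} {lamT : ℝ} (hT : lamT < 1)
    (hn : 2 / √(1 - lamT ^ 2) < n) :
    StrictMonoOn (gn n) (Icc 0 lamT) := by
  have hsub : Icc 0 lamT ⊆ Ioo (-1) 1 := fun x hx => ⟨by linarith [hx.1], by linarith [hx.2]⟩
  refine strictMonoOn_of_deriv_pos (convex_Icc 0 lamT) (fun x hx => ?_) (fun x hx => ?_)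
  · exact (hasDerivAt_gn (hsub hx) n).continuousAt.continuousWithinAt
  · rw [interior_Icc] at hx
    exact (deriv_gn_pos_iff (hsub (Ioo_subset_Icc_self hx)) n).2
      ((add_one_div_sqrt_le_of_mem_Icc hT (Ioo_subset_Icc_self hx)).trans_lt hn)

/-- for `g_n(λ) = γ(λ)·(ρ*(λ))^n` on `[0,1)`, the derivative of `g_n` is
positive iff `n > (λ+1)/√(1-λ²)`; consequently, if `n > 2/√(1-λ̃²) + 1` then `g_n` is
strictly increasing on `[0, λ̃]`. -/
theorem gn_deriv_pos_iff (n : ℕ) (γ ρStar g : ℝ → ℝ)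
    (hγ : ∀ lam : ℝ, γ lam =
      2 * Real.sqrt (1 - lam ^ 2) / (1 + lam + Real.sqrt (1 - lam ^ 2)))
    (hρ : ∀ lam : ℝ, ρStar lam =
      (lam + 1 + Real.sqrt (1 - lam ^ 2)) / (2 * (1 + Real.sqrt (1 - lam ^ 2))))
    (hg : ∀ lam : ℝ, g lam = γ lam * (ρStar lam) ^ n) :
    (∀ lam ∈ Set.Ico (0 : ℝ) 1,
        0 < deriv g lam ↔ (lam + 1) / Real.sqrt (1 - lam ^ 2) < (n : ℝ)) ∧
    (∀ lamT ∈ Set.Ico (0 : ℝ) 1,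
        2 / Real.sqrt (1 - lamT ^ 2) + 1 < (n : ℝ) →
        StrictMonoOn g (Set.Icc 0 lamT)) := by
  obtain rfl : γ = gammaOpt := funext hγ
  obtain rfl : ρStar = rhoStarOpt := funext hρ
  obtain rfl : g = gn n := funext hg
  refine ⟨fun lam hlam => ?_, fun lamT hlamT hn => ?_⟩
  · exact deriv_gn_pos_iff ⟨by linarith [hlam.1], hlam.2⟩ n
  · exact strictMonoOn_gn hlamT.2 (by linarith)
end
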